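/- arXiv:1505.03509 — 5 statements merged into one kernel-verified Lean document; each statement's English description precedes it below -/
import Mathlib

section
/- For every natural number r, the vector k_r lies in the kernel of M_r; that is, M_r · k_r = 0 (as a vector in ℤ^{3^{r+1}−1}). -/
/-- Entries of the 2×3 matrix `M₀` with rows (1,0,1) and (0,1,1), as a function on ℕ. -/
def M0nat : ℕ → ℕ → ℤ
  | 0, 0 => 1
  | 0, 1 => 0
  | 0, 2 => 1
  | 1, 0 => 0
  | 1, 1 => 1
  | 1, 2 => 1
  | _, _ => 0

/-- Entries of the matrix `M_r` (with `3^(r+1) - 1` rows and `3^(r+1)` columns):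
`M_0` is as above, and `M_{r+1}` is the vertical stack of `M_r ⊗ (1,1,1)`
(first `3^(r+1) - 1` rows) and `I_{3^(r+1)} ⊗ M_0` (remaining `2·3^(r+1)` rows).
In the Kronecker product, row/column pairs are ordered lexicographically, i.e.
`(A ⊗ B) (p·i + s) (q·j + t) = A i j * B s t` for `B` of size `p × q`. -/
def Mnat : ℕ → ℕ → ℕ → ℤ
  | 0, i, j => M0nat i j
  | r + 1, i, j =>
    if i < 3 ^ (r + 1) - 1 then
      -- block `M_r ⊗ (1,1,1)`
      Mnat r i (j / 3)
    else
      -- block `I_{3^(r+1)} ⊗ M_0`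
      if (i - (3 ^ (r + 1) - 1)) / 2 = j / 3 then
        M0nat ((i - (3 ^ (r + 1) - 1)) % 2) (j % 3)
      else 0

/-- The matrix `M_r`. -/
def Mmat (r : ℕ) : Matrix (Fin (3 ^ (r + 1) - 1)) (Fin (3 ^ (r + 1))) ℤ :=
  Matrix.of fun i j => Mnat r i.val j.val

/-- Components of the vector `k_r` of length `3^(r+1)`:
`k_0 = (1,1,-1)` and `k_{r+1} = (k_r, k_r, -k_r)`. -/
def knat : ℕ → ℕ → ℤ
  | 0, j => if j = 2 then -1 else 1
  | r + 1, j => if j < 2 * 3 ^ (r + 1) then knat r (j % 3 ^ (r + 1)) else -knat r (j % 3 ^ (r + 1))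

/-- The vector `k_r`. -/
def kvec (r : ℕ) : Fin (3 ^ (r + 1)) → ℤ := fun j => knat r j.val

lemma knat_succ (r : ℕ) : ∀ j, j < 3 ^ (r + 2) → knat (r + 1) j = knat r (j / 3) * knat 0 (j % 3) := by
  induction r with
  | zero =>
    intro j hj
    interval_cases j <;> decide
  | succ r ih =>
    intro j hj
    have e : (3 : ℕ) ^ (r + 2) = 3 * 3 ^ (r + 1) := by ring
    have hd : j % 3 ^ (r + 2) / 3 = j / 3 % 3 ^ (r + 1) := by
      rw [e, Nat.mod_mul_right_div_self]
    have hm : j % 3 ^ (r + 2) % 3 = j % 3 := Nat.mod_mod_of_dvd j ⟨3 ^ (r + 1), by ring⟩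
    have hmod : j % 3 ^ (r + 2) < 3 ^ (r + 2) := Nat.mod_lt _ (by positivity)
    have hiff : j < 2 * 3 ^ (r + 2) ↔ j / 3 < 2 * 3 ^ (r + 1) := by rw [e]; omega
    show (if j < 2 * 3 ^ (r + 2) then knat (r + 1) (j % 3 ^ (r + 2))
        else -knat (r + 1) (j % 3 ^ (r + 2))) =
      (if j / 3 < 2 * 3 ^ (r + 1) then knat r (j / 3 % 3 ^ (r + 1))
        else -knat r (j / 3 % 3 ^ (r + 1))) * knat 0 (j % 3)
    rw [ih _ hmod, hd, hm]
    by_cases h : j < 2 * 3 ^ (r + 2)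
    · rw [if_pos h, if_pos (hiff.mp h)]
    · rw [if_neg h, if_neg (fun h' => h (hiff.mpr h')), neg_mul]

lemma sum_range_three_mul (f : ℕ → ℤ) (m : ℕ) :
    ∑ j ∈ Finset.range (3 * m), f j =
      ∑ q ∈ Finset.range m, (f (3 * q) + f (3 * q + 1) + f (3 * q + 2)) := by
  induction m with
  | zero => simp
  | succ n ih =>
    have h : 3 * (n + 1) = 3 * n + 1 + 1 + 1 := by ring
    rw [h, Finset.sum_range_succ, Finset.sum_range_succ, Finset.sum_range_succ, ih,
      Finset.sum_range_succ]
    have h2 : 3 * n + 1 + 1 = 3 * n + 2 := rfl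
    rw [h2]
    ring

lemma M0_dot (s : ℕ) (hs : s < 2) :
    M0nat s 0 * knat 0 0 + M0nat s 1 * knat 0 1 + M0nat s 2 * knat 0 2 = 0 := by
  interval_cases s <;> decide

lemma key (r : ℕ) : ∀ i < 3 ^ (r + 1) - 1,
    ∑ j ∈ Finset.range (3 ^ (r + 1)), Mnat r i j * knat r j = 0 := by
  induction r with
  | zero =>
    intro i hi
    interval_cases i <;> decide
  | succ r ih =>
    intro i hi
    have e : (3 : ℕ) ^ (r + 2) = 3 * 3 ^ (r + 1) := by ring
    have hpos : 0 < (3 : ℕ) ^ (r + 1) := by positivity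
    rw [e, sum_range_three_mul]
    have hk : ∀ q t, q < 3 ^ (r + 1) → t < 3 →
        knat (r + 1) (3 * q + t) = knat r q * knat 0 t := by
      intro q t hq ht
      have h1 : (3 * q + t) / 3 = q := by omega
      have h2 : (3 * q + t) % 3 = t := by omega
      rw [knat_succ r _ (by rw [e]; omega), h1, h2]
    by_cases hi' : i < 3 ^ (r + 1) - 1
    · rw [← ih i hi']
      apply Finset.sum_congr rfl
      intro q hq
      simp only [Finset.mem_range] at hq
      have hM : ∀ t, Mnat (r + 1) i (3 * q + t) = Mnat r i ((3 * q + t) / 3) := by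
        intro t
        show (if i < 3 ^ (r + 1) - 1 then Mnat r i ((3 * q + t) / 3) else _) = _
        rw [if_pos hi']
      have hM0 : Mnat (r + 1) i (3 * q) = Mnat r i q := by
        have := hM 0
        rw [show (3 * q + 0) = 3 * q from rfl] at this
        rw [this, show (3 * q) / 3 = q from by omega]
      have hM1 : Mnat (r + 1) i (3 * q + 1) = Mnat r i q := by
        rw [hM 1, show (3 * q + 1) / 3 = q from by omega]
      have hM2 : Mnat (r + 1) i (3 * q + 2) = Mnat r i q := by
        rw [hM 2, show (3 * q + 2) / 3 = q from by omega]
      have hk0 : knat (r + 1) (3 * q) = knat r q := by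
        have := hk q 0 hq (by norm_num)
        rw [show (3 * q + 0) = 3 * q from rfl] at this
        rw [this]; simp [knat]
      have hk1 : knat (r + 1) (3 * q + 1) = knat r q := by
        rw [hk q 1 hq (by norm_num)]; simp [knat]
      have hk2 : knat (r + 1) (3 * q + 2) = -knat r q := by
        rw [hk q 2 hq (by norm_num)]; simp [knat]
      rw [hM0, hM1, hM2, hk0, hk1, hk2]
      ring
    · set a := i - (3 ^ (r + 1) - 1) with ha
      have hab : a < 2 * 3 ^ (r + 1) := by rw [e] at hi; omega
      have hq0 : a / 2 < 3 ^ (r + 1) := by omega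
      have hs : a % 2 < 2 := Nat.mod_lt _ (by norm_num)
      have hM : ∀ q t, t < 3 → Mnat (r + 1) i (3 * q + t) =
          if a / 2 = q then M0nat (a % 2) t else 0 := by
        intro q t ht
        show (if i < 3 ^ (r + 1) - 1 then Mnat r i ((3 * q + t) / 3)
            else if a / 2 = (3 * q + t) / 3 then M0nat (a % 2) ((3 * q + t) % 3) else 0) = _
        rw [if_neg hi', show (3 * q + t) / 3 = q from by omega,
          show (3 * q + t) % 3 = t from by omega]
      have step : ∀ q ∈ Finset.range (3 ^ (r + 1)),
          (Mnat (r + 1) i (3 * q) * knat (r + 1) (3 * q) +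
            Mnat (r + 1) i (3 * q + 1) * knat (r + 1) (3 * q + 1) +
            Mnat (r + 1) i (3 * q + 2) * knat (r + 1) (3 * q + 2)) =
          if a / 2 = q then
            (M0nat (a % 2) 0 * knat 0 0 + M0nat (a % 2) 1 * knat 0 1 +
              M0nat (a % 2) 2 * knat 0 2) * knat r q
          else 0 := by
        intro q hq
        simp only [Finset.mem_range] at hq
        have e0 := hM q 0 (by norm_num)
        rw [show (3 * q + 0) = 3 * q from rfl] at e0
        have e0' := hk q 0 hq (by norm_num)
        rw [show (3 * q + 0) = 3 * q from rfl] at e0'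
        rw [e0, hM q 1 (by norm_num), hM q 2 (by norm_num), e0',
          hk q 1 hq (by norm_num), hk q 2 hq (by norm_num)]
        split_ifs with h
        · ring
        · ring
      rw [Finset.sum_congr rfl step, Finset.sum_ite_eq]
      rw [if_pos (Finset.mem_range.mpr hq0), M0_dot _ hs, zero_mul]

open Matrix in
/-- For every natural number `r`, the vector `k_r` lies in the kernel of `M_r`:
`M_r · k_r = 0` as a vector in `ℤ^(3^(r+1) - 1)`. -/
theorem Mmat_mulVec_kvec (r : ℕ) : Mmat r *ᵥ kvec r = 0 := by
  funext i
  show ∑ j : Fin (3 ^ (r + 1)), Mnat r i.val j.val * knat r j.val = 0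
  rw [Fin.sum_univ_eq_sum_range (fun j => Mnat r i.val j * knat r j)]
  exact key r i.val i.isLt
end

section
/- For every natural number r, the rows of M_r are linearly independent over ℚ; equivalently, the rank of M_r (viewed as a rational matrix) equals its number of rows, 3^{r+1} − 1. -/
/-!
Suppose `∑ᵢ gᵢ · (row i of M_{r+1}) = 0`, and write `S_b` for the `b`-th entry of the combination
of the rows of the top block `M_r` with the first `3^(r+1) - 1` coefficients. Column `3b + t` of
`M_{r+1}` sees `M_r` only through column `b`, and of the bottom block only the two rows `2b`, `2b+1`
of the copy of `M_0` in position `b`. With `x, y` their coefficients, the columns `t = 0, 1, 2`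
give `S_b + x = S_b + y = S_b + x + y = 0`, so `S_b = x = y = 0`: the bottom coefficients vanish,
and the top ones vanish by induction because `S = 0`.
-/

open Finset

lemma linearIndependent_rows_of_forall_nat {R : Type*} [Ring R] {m n : ℕ} (f : ℕ → ℕ → R)
    (h : ∀ g : ℕ → R, (∀ j < n, ∑ i ∈ range m, g i * f i j = 0) → ∀ i < m, g i = 0) :
    LinearIndependent R (fun (i : Fin m) (j : Fin n) => f i j) := by
  rw [Fintype.linearIndependent_iff]
  intro g hg i
  let G : ℕ → R := fun k => if hk : k < m then g ⟨k, hk⟩ else 0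
  have hG : ∀ k : Fin m, G k = g k := fun k => dif_pos k.isLt
  rw [← hG]
  refine h G (fun j hj => ?_) i i.isLt
  rw [← Fin.sum_univ_eq_sum_range (fun k => G k * f k j)]
  simpa [hG] using congrFun hg ⟨j, hj⟩

lemma eq_zero_of_forall_add_mul_M0nat {R : Type*} [CommRing R] {S x y : R}
    (h : ∀ t < 3, S + x * M0nat 0 t + y * M0nat 1 t = 0) : S = 0 ∧ x = 0 ∧ y = 0 := by
  have h0 := h 0 (by norm_num)
  have h1 := h 1 (by norm_num)
  have h2 := h 2 (by norm_num)
  simp only [M0nat, Int.cast_one, Int.cast_zero, mul_one, mul_zero, add_zero] at h0 h1 h2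
  exact ⟨by linear_combination h0 + h1 - h2, by linear_combination h2 - h1,
    by linear_combination h2 - h0⟩

lemma Mnat_succ_of_lt {r i : ℕ} (hi : i < 3 ^ (r + 1) - 1) (j : ℕ) :
    Mnat (r + 1) i j = Mnat r i (j / 3) := by
  rw [Mnat, if_pos hi]

lemma Mnat_succ_sub_one_add (r s b : ℕ) {t : ℕ} (ht : t < 3) :
    Mnat (r + 1) (3 ^ (r + 1) - 1 + s) (3 * b + t) =
      if s / 2 = b then M0nat (s % 2) t else 0 := by
  rw [Mnat, if_neg (by omega), Nat.add_sub_cancel_left,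
    show (3 * b + t) / 3 = b by omega, show (3 * b + t) % 3 = t by omega]

lemma sum_mul_Mnat_succ {R : Type*} [Ring R] (r : ℕ) (g : ℕ → R) {b t : ℕ}
    (hb : b < 3 ^ (r + 1)) (ht : t < 3) :
    ∑ i ∈ range (3 ^ (r + 2) - 1), g i * Mnat (r + 1) i (3 * b + t) =
      ∑ i ∈ range (3 ^ (r + 1) - 1), g i * Mnat r i b
        + g (3 ^ (r + 1) - 1 + 2 * b) * M0nat 0 t
        + g (3 ^ (r + 1) - 1 + (2 * b + 1)) * M0nat 1 t := by
  have hN : 3 ^ (r + 2) - 1 = 3 ^ (r + 1) - 1 + 2 * 3 ^ (r + 1) := by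
    have : 0 < 3 ^ (r + 1) := by positivity
    rw [pow_succ]; omega
  rw [hN, sum_range_add, add_assoc]
  congr 1
  · refine sum_congr rfl fun i hi => ?_
    rw [Mnat_succ_of_lt (mem_range.mp hi), show (3 * b + t) / 3 = b by omega]
  · simp_rw [Mnat_succ_sub_one_add r _ b ht]
    rw [sum_eq_add (2 * b) (2 * b + 1) (by omega)
      (fun s _ hs => by rw [if_neg (by omega), Int.cast_zero, mul_zero])
      (fun h => absurd (mem_range.mpr (by omega)) h)
      (fun h => absurd (mem_range.mpr (by omega)) h),
      if_pos (by omega), if_pos (by omega), Nat.mul_mod_right, show (2 * b + 1) % 2 = 1 by omega]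

theorem eq_zero_of_forall_sum_mul_Mnat_eq_zero {R : Type*} [CommRing R] (r : ℕ) (g : ℕ → R)
    (hg : ∀ j < 3 ^ (r + 1), ∑ i ∈ range (3 ^ (r + 1) - 1), g i * Mnat r i j = 0) :
    ∀ i < 3 ^ (r + 1) - 1, g i = 0 := by
  induction r generalizing g with
  | zero =>
    have h0 := hg 0 (by norm_num)
    have h1 := hg 1 (by norm_num)
    simp only [zero_add, pow_one, Nat.reduceSub, sum_range_succ, sum_range_zero, Mnat, M0nat,
      Int.cast_one, Int.cast_zero, mul_one, mul_zero, add_zero] at h0 h1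
    intro i hi
    interval_cases i <;> assumption
  | succ r ih =>
    have hblock : ∀ b < 3 ^ (r + 1),
        ∑ i ∈ range (3 ^ (r + 1) - 1), g i * Mnat r i b = 0 ∧
          g (3 ^ (r + 1) - 1 + 2 * b) = 0 ∧ g (3 ^ (r + 1) - 1 + (2 * b + 1)) = 0 :=
      fun b hb => eq_zero_of_forall_add_mul_M0nat fun t ht => by
        rw [← sum_mul_Mnat_succ r g hb ht]
        exact hg _ (by rw [pow_succ]; omega)
    intro i hi
    rcases lt_or_ge i (3 ^ (r + 1) - 1) with htop | hbot
    · exact ih g (fun b hb => (hblock b hb).1) i htop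
    · obtain ⟨s, rfl⟩ := Nat.exists_eq_add_of_le hbot
      have hs : s / 2 < 3 ^ (r + 1) := by rw [pow_succ] at hi; omega
      rcases Nat.even_or_odd' s with ⟨b, rfl | rfl⟩
      · exact (hblock b (by omega)).2.1
      · exact (hblock b (by omega)).2.2

/-- For every natural number `r`, the rows of `M_r` are linearly independent over ℚ;
equivalently, the rank of `M_r` viewed as a rational matrix equals its number of rows,
`3^(r+1) - 1`. -/
theorem Mmat_rows_linearIndependent (r : ℕ) :
    LinearIndependent ℚ (fun i => ((Mmat r).map ((↑) : ℤ → ℚ)) i) ∧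
      ((Mmat r).map ((↑) : ℤ → ℚ)).rank = 3 ^ (r + 1) - 1 := by
  have hrows : LinearIndependent ℚ (fun i => ((Mmat r).map ((↑) : ℤ → ℚ)) i) :=
    linearIndependent_rows_of_forall_nat (fun i j => (Mnat r i j : ℚ))
      (eq_zero_of_forall_sum_mul_Mnat_eq_zero r)
  exact ⟨hrows, hrows.rank_matrix.trans (Fintype.card_fin _)⟩
end

section
/- For every natural number r, the kernel of M_r viewed as a linear map ℚ^{3^{r+1}} → ℚ^{3^{r+1}−1} is one-dimensional, and it is spanned by the vector k_r. -/
open Finset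

lemma sum_range_mul3 {M : Type*} [AddCommMonoid M] (n : ℕ) (f : ℕ → M) :
    ∑ j ∈ range (3*n), f j = ∑ q ∈ range n, (f (3*q) + f (3*q+1) + f (3*q+2)) := by
  induction n with
  | zero => simp
  | succ n ih =>
    have h : 3 * (n+1) = (3*n) + 1 + 1 + 1 := by ring
    rw [h, sum_range_succ, sum_range_succ, sum_range_succ, ih, sum_range_succ]
    have h2 : 3*n+1+1 = 3*n+2 := rfl
    rw [h2]; simp [add_assoc]

lemma knat_zero (r : ℕ) : knat r 0 = 1 := by
  induction r with
  | zero => rfl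
  | succ r ih =>
    have h : (0:ℕ) < 2 * 3 ^ (r+1) := by positivity
    simp [knat, h, ih]

lemma knat_digit (r q t : ℕ) (hq : q < 3^(r+1)) (ht : t < 3) :
    knat (r+1) (3*q + t) = (if t = 2 then -1 else 1) * knat r q := by
  induction r generalizing q t with
  | zero =>
    interval_cases q <;> interval_cases t <;> decide
  | succ r ih =>
    have hN : (0:ℕ) < 3^(r+1) := by positivity
    have hp : (3:ℕ)^(r+1+1) = 3 * 3^(r+1) := by ring
    have hmod : (3*q + t) % 3^(r+1+1) = 3 * (q % 3^(r+1)) + t := by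
      rw [hp]
      conv_lhs => rw [show q = 3^(r+1) * (q / 3^(r+1)) + q % 3^(r+1) from (Nat.div_add_mod q _).symm]
      have : 3 * (3^(r+1) * (q / 3^(r+1)) + q % 3^(r+1)) + t
          = (3 * (q % 3^(r+1)) + t) + (q / 3^(r+1)) * (3 * 3^(r+1)) := by ring
      rw [this, Nat.add_mul_mod_self_right, Nat.mod_eq_of_lt]
      have := Nat.mod_lt q hN
      omega
    have hcond : (3*q + t < 2 * 3^(r+1+1)) ↔ (q < 2 * 3^(r+1)) := by
      rw [hp]; omega
    have hqm : q % 3^(r+1) < 3^(r+1) := Nat.mod_lt q hN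
    show (if 3*q+t < 2 * 3^(r+1+1) then knat (r+1) ((3*q+t) % 3^(r+1+1))
        else -knat (r+1) ((3*q+t) % 3^(r+1+1))) = _
    rw [hmod, ih _ _ hqm ht]
    show _ = (if t = 2 then -1 else 1) *
      (if q < 2 * 3^(r+1) then knat r (q % 3^(r+1)) else -knat r (q % 3^(r+1)))
    by_cases hq2 : q < 2 * 3^(r+1) <;> simp [hcond, hq2] <;> ring

lemma Mk_zero (r : ℕ) : ∀ i < 3^(r+1)-1, ∑ j ∈ range (3^(r+1)), Mnat r i j * knat r j = 0 := by
  induction r with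
  | zero =>
    intro i hi
    interval_cases i <;> simp [Finset.sum_range_succ, Mnat, M0nat, knat]
  | succ r ih =>
    intro i hi
    have hN : (0:ℕ) < 3^(r+1) := by positivity
    have hp : (3:ℕ)^(r+1+1) = 3 * 3^(r+1) := by ring
    rw [hp, sum_range_mul3]
    by_cases htop : i < 3^(r+1) - 1
    · have key : ∀ q ∈ range (3^(r+1)),
          (Mnat (r+1) i (3*q) * knat (r+1) (3*q) + Mnat (r+1) i (3*q+1) * knat (r+1) (3*q+1)
            + Mnat (r+1) i (3*q+2) * knat (r+1) (3*q+2)) = Mnat r i q * knat r q := by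
        intro q hq
        rw [mem_range] at hq
        have e0 : Mnat (r+1) i (3*q) = Mnat r i q := by
          show (if i < 3^(r+1)-1 then Mnat r i ((3*q)/3) else _) = _
          rw [if_pos htop]; congr 1; omega
        have e1 : Mnat (r+1) i (3*q+1) = Mnat r i q := by
          show (if i < 3^(r+1)-1 then Mnat r i ((3*q+1)/3) else _) = _
          rw [if_pos htop]; congr 1; omega
        have e2 : Mnat (r+1) i (3*q+2) = Mnat r i q := by
          show (if i < 3^(r+1)-1 then Mnat r i ((3*q+2)/3) else _) = _
          rw [if_pos htop]; congr 1; omega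
        have k0 : knat (r+1) (3*q) = knat r q := by
          simpa using knat_digit r q 0 hq (by norm_num)
        rw [e0, e1, e2, k0, knat_digit r q 1 hq (by norm_num),
          knat_digit r q 2 hq (by norm_num)]
        norm_num
      rw [Finset.sum_congr rfl key]
      exact ih i htop
    · apply Finset.sum_eq_zero
      intro q hq
      rw [mem_range] at hq
      have hd0 : (3*q)/3 = q := by omega
      have hd1 : (3*q+1)/3 = q := by omega
      have hd2 : (3*q+2)/3 = q := by omega
      have hm0 : (3*q)%3 = 0 := by omega
      have hm1 : (3*q+1)%3 = 1 := by omega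
      have hm2 : (3*q+2)%3 = 2 := by omega
      have e : ∀ t, Mnat (r+1) i (3*q+t) =
          (if (i - (3^(r+1)-1))/2 = (3*q+t)/3 then M0nat ((i - (3^(r+1)-1)) % 2) ((3*q+t)%3) else 0) := by
        intro t
        show (if i < 3^(r+1)-1 then _ else _) = _
        rw [if_neg htop]
      have e0 := e 0; have e1 := e 1; have e2 := e 2
      simp only [Nat.add_zero] at e0
      rw [hd0, hm0] at e0; rw [hd1, hm1] at e1; rw [hd2, hm2] at e2
      by_cases hqm : (i - (3^(r+1)-1))/2 = q
      · have k0 : knat (r+1) (3*q) = knat r q := by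
          simpa using knat_digit r q 0 hq (by norm_num)
        rw [e0, e1, e2, if_pos hqm, if_pos hqm, if_pos hqm, k0,
          knat_digit r q 1 hq (by norm_num), knat_digit r q 2 hq (by norm_num)]
        have hb : (i - (3^(r+1)-1)) % 2 = 0 ∨ (i - (3^(r+1)-1)) % 2 = 1 := by omega
        rcases hb with hb | hb <;> rw [hb] <;> simp [M0nat] <;> ring
      · rw [e0, e1, e2, if_neg hqm, if_neg hqm, if_neg hqm]; ring

lemma ker_sub (r : ℕ) : ∀ x : ℕ → ℚ,
    (∀ i < 3^(r+1)-1, ∑ j ∈ range (3^(r+1)), (Mnat r i j : ℚ) * x j = 0) →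
    ∀ j < 3^(r+1), x j = x 0 * (knat r j : ℚ) := by
  induction r with
  | zero =>
    intro x h j hj
    have h0 := h 0 (by norm_num)
    have h1 := h 1 (by norm_num)
    simp [Finset.sum_range_succ, Mnat, M0nat] at h0 h1
    interval_cases j <;> simp [knat] <;> linarith
  | succ r ih =>
    intro x h j hj
    have hN : (0:ℕ) < 3^(r+1) := by positivity
    have hp : (3:ℕ)^(r+1+1) = 3 * 3^(r+1) := by ring
    -- bottom-block rows
    have hbot : ∀ m < 3^(r+1), x (3*m) + x (3*m+2) = 0 ∧ x (3*m+1) + x (3*m+2) = 0 := by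
      intro m hm
      have key : ∀ b < 2, ∑ q ∈ range (3^(r+1)),
          ((Mnat (r+1) ((3^(r+1)-1) + (2*m+b)) (3*q) : ℚ) * x (3*q)
            + (Mnat (r+1) ((3^(r+1)-1) + (2*m+b)) (3*q+1) : ℚ) * x (3*q+1)
            + (Mnat (r+1) ((3^(r+1)-1) + (2*m+b)) (3*q+2) : ℚ) * x (3*q+2)) = 0 := by
        intro b hb
        have hi : (3^(r+1)-1) + (2*m+b) < 3^(r+1+1) - 1 := by rw [hp]; omega
        have := h _ hi
        rw [hp, sum_range_mul3] at this
        exact this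
      have simpM : ∀ b < 2, ∀ q t, t < 3 →
          Mnat (r+1) ((3^(r+1)-1) + (2*m+b)) (3*q+t) = if m = q then M0nat b t else 0 := by
        intro b hb q t ht
        set i := (3^(r+1)-1) + (2*m+b) with hidef
        have hnot : ¬ i < 3^(r+1)-1 := by omega
        have hsub : i - (3^(r+1)-1) = 2*m+b := by omega
        have hdiv : (2*m+b)/2 = m := by omega
        have hmod : (2*m+b)%2 = b := by omega
        have hd : (3*q+t)/3 = q := by omega
        have hmm : (3*q+t)%3 = t := by omega
        show (if i < 3^(r+1)-1 then _ else _) = _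
        rw [if_neg hnot, hsub, hdiv, hmod, hd, hmm]
      have row : ∀ b < 2, (M0nat b 0 : ℚ) * x (3*m) + (M0nat b 1 : ℚ) * x (3*m+1)
          + (M0nat b 2 : ℚ) * x (3*m+2) = 0 := by
        intro b hb
        have s0 : ∀ q, Mnat (r+1) ((3^(r+1)-1) + (2*m+b)) (3*q)
            = if m = q then M0nat b 0 else 0 := fun q => by
          simpa using simpM b hb q 0 (by norm_num)
        have s1 : ∀ q, Mnat (r+1) ((3^(r+1)-1) + (2*m+b)) (3*q+1)
            = if m = q then M0nat b 1 else 0 := fun q => simpM b hb q 1 (by norm_num)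
        have s2 : ∀ q, Mnat (r+1) ((3^(r+1)-1) + (2*m+b)) (3*q+2)
            = if m = q then M0nat b 2 else 0 := fun q => simpM b hb q 2 (by norm_num)
        have hk := key b hb
        rw [Finset.sum_eq_single m] at hk
        · rw [s0 m, s1 m, s2 m, if_pos rfl, if_pos rfl, if_pos rfl] at hk
          exact hk
        · intro q hq hqm
          rw [s0 q, s1 q, s2 q, if_neg (fun h => hqm h.symm), if_neg (fun h => hqm h.symm),
            if_neg (fun h => hqm h.symm)]
          norm_num
        · intro hm'; exact absurd (mem_range.mpr hm) hm'
      have r0 := row 0 (by norm_num)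
      have r1 := row 1 (by norm_num)
      simp [M0nat] at r0 r1
      exact ⟨by linarith, by linarith⟩
    -- top-block rows give hypothesis for y = x ∘ (3*·)
    have htop : ∀ i < 3^(r+1)-1, ∑ q ∈ range (3^(r+1)), (Mnat r i q : ℚ) * x (3*q) = 0 := by
      intro i hi
      have hi' : i < 3^(r+1+1) - 1 := by rw [hp]; omega
      have hsum := h i hi'
      rw [hp, sum_range_mul3] at hsum
      rw [← hsum]
      apply Finset.sum_congr rfl
      intro q hq
      rw [mem_range] at hq
      have e : ∀ t, t < 3 → Mnat (r+1) i (3*q+t) = Mnat r i q := by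
        intro t ht
        show (if i < 3^(r+1)-1 then Mnat r i ((3*q+t)/3) else _) = _
        rw [if_pos hi]; congr 1; omega
      have e0 : Mnat (r+1) i (3*q) = Mnat r i q := by simpa using e 0 (by norm_num)
      rw [e0, e 1 (by norm_num), e 2 (by norm_num)]
      obtain ⟨p1, p2⟩ := hbot q hq
      linear_combination (-(Mnat r i q : ℚ)) * p2
    have hy := ih (fun q => x (3*q)) htop
    -- conclude
    obtain ⟨q, t, hq, ht, hjqt⟩ : ∃ q t, q < 3^(r+1) ∧ t < 3 ∧ j = 3*q + t := by
      refine ⟨j/3, j%3, by rw [hp] at hj; omega, by omega, by omega⟩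
    subst hjqt
    have hyq := hy q hq
    norm_num at hyq
    obtain ⟨p1, p2⟩ := hbot q hq
    interval_cases t
    · have hk0 : knat (r+1) (3*q) = knat r q := by
        simpa using knat_digit r q 0 hq (by norm_num)
      simpa [hk0] using hyq
    · have hk1 : knat (r+1) (3*q+1) = knat r q := by
        simpa using knat_digit r q 1 hq (by norm_num)
      rw [hk1]
      have : x (3*q+1) = x (3*q) := by linarith
      rw [this]; exact hyq
    · have hk2 : knat (r+1) (3*q+2) = -knat r q := by
        simpa using knat_digit r q 2 hq (by norm_num)
      rw [hk2]
      have hx2 : x (3*q+2) = -x (3*q) := by linarith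
      rw [hx2, hyq]; push_cast; ring

/-- For every natural number `r`, the kernel of `M_r`, viewed as a linear map
`ℚ^(3^(r+1)) → ℚ^(3^(r+1)-1)`, is one-dimensional and spanned by `k_r`. -/
theorem ker_Mmat_eq_span_kvec (r : ℕ) :
    LinearMap.ker (((Mmat r).map ((↑) : ℤ → ℚ)).mulVecLin) =
        Submodule.span ℚ {fun j => ((kvec r j : ℤ) : ℚ)} ∧
      Module.finrank ℚ (LinearMap.ker (((Mmat r).map ((↑) : ℤ → ℚ)).mulVecLin)) = 1 := by
  have hN : (0:ℕ) < 3^(r+1) := by positivity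
  haveI : NeZero ((3:ℕ)^(r+1)) := ⟨by positivity⟩
  set k : Fin (3^(r+1)) → ℚ := fun j => ((kvec r j : ℤ) : ℚ) with hkdef
  have hker : LinearMap.ker (((Mmat r).map ((↑) : ℤ → ℚ)).mulVecLin) = Submodule.span ℚ {k} := by
    apply le_antisymm
    · intro x hx
      rw [LinearMap.mem_ker, Matrix.mulVecLin_apply] at hx
      set x' : ℕ → ℚ := fun j => if h : j < 3^(r+1) then x ⟨j, h⟩ else 0 with hx'def
      have hhyp : ∀ i < 3^(r+1)-1, ∑ j ∈ Finset.range (3^(r+1)), (Mnat r i j : ℚ) * x' j = 0 := by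
        intro i hi
        have hrow : ((Mmat r).map ((↑) : ℤ → ℚ)).mulVec x ⟨i, hi⟩ = 0 := by
          rw [hx]; rfl
        have hform : ((Mmat r).map ((↑) : ℤ → ℚ)).mulVec x ⟨i, hi⟩
            = ∑ j : Fin (3^(r+1)), (Mnat r i j.val : ℚ) * x j := by
          simp [Matrix.mulVec, dotProduct, Mmat]
        rw [← Fin.sum_univ_eq_sum_range (fun j => (Mnat r i j : ℚ) * x' j) (3^(r+1))]
        rw [hform] at hrow
        rw [← hrow]
        apply Finset.sum_congr rfl
        intro j _
        have : x' j.val = x j := by simp [hx'def, j.isLt]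
        rw [this]
      have hx' := ker_sub r x' hhyp
      rw [Submodule.mem_span_singleton]
      refine ⟨x' 0, ?_⟩
      funext j
      have h1 : x j = x' j.val := by simp [hx'def, j.isLt]
      have h2 := hx' j.val j.isLt
      simp only [Pi.smul_apply, smul_eq_mul, hkdef]
      rw [h1, h2, kvec]
    · rw [Submodule.span_le, Set.singleton_subset_iff, SetLike.mem_coe, LinearMap.mem_ker,
        Matrix.mulVecLin_apply]
      funext i
      have h0 : (((∑ j ∈ Finset.range (3^(r+1)), Mnat r i.val j * knat r j : ℤ)) : ℚ) = 0 := by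
        rw [Mk_zero r i.val i.isLt]; exact Int.cast_zero
      have hform : ((Mmat r).map ((↑) : ℤ → ℚ)).mulVec k i
          = ∑ j : Fin (3^(r+1)), (Mnat r i.val j.val : ℚ) * (knat r j.val : ℚ) := by
        simp [Matrix.mulVec, dotProduct, Mmat, hkdef, kvec]
      show ((Mmat r).map ((↑) : ℤ → ℚ)).mulVec k i = 0
      rw [hform, Fin.sum_univ_eq_sum_range (fun j => (Mnat r i.val j : ℚ) * (knat r j : ℚ)) (3^(r+1)),
        ← h0]
      push_cast
      rfl
  refine ⟨hker, ?_⟩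
  rw [hker]
  have hk0 : k ≠ 0 := by
    intro h
    have := congrFun h ⟨0, hN⟩
    simp [hkdef, kvec, knat_zero] at this
  exact finrank_span_singleton hk0
end

section
/- For every natural number r, the following hold for k_r: (i) ∑ k_r = 1; (ii) min(∑⁺ k_r, ∑⁻ k_r) = ∑⁻ k_r; and (iii) ∑⁻ k_r = (3^{r+1}+1)/2 − 1. -/
/-- `∑⁺ a`: the sum of the positive components of an integer vector `a`. -/
def sumPos {n : ℕ} (a : Fin n → ℤ) : ℤ := ∑ j, max (a j) 0

/-- `∑⁻ a`: the sum of the absolute values of the negative components of `a`. -/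
def sumNeg {n : ℕ} (a : Fin n → ℤ) : ℤ := ∑ j, max (-a j) 0

/-! Every entry of `k_r` is `±1`, so `∑⁺ k_r + ∑⁻ k_r = 3^(r+1)`,
while `∑⁺ k_r - ∑⁻ k_r = ∑ k_r`, and `∑ k_r = 1` for all `r` because the three blocks
of `k_(r+1)` contribute `∑ k_r + ∑ k_r - ∑ k_r`. -/

open Finset

lemma sumPos_sub_sumNeg {n : ℕ} (a : Fin n → ℤ) : sumPos a - sumNeg a = ∑ j, a j := by
  simp only [sumPos, sumNeg, ← sum_sub_distrib, max_zero_sub_max_neg_zero_eq_self]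

lemma sumPos_add_sumNeg {n : ℕ} (a : Fin n → ℤ) : sumPos a + sumNeg a = ∑ j, |a j| := by
  simp only [sumPos, sumNeg, ← sum_add_distrib, max_zero_add_max_neg_zero_eq_abs_self]

lemma abs_knat (r j : ℕ) : |knat r j| = 1 := by
  induction r generalizing j with
  | zero => unfold knat; split_ifs <;> rfl
  | succ r ih => unfold knat; split_ifs <;> simp [ih]

lemma knat_succ_of_lt {r j : ℕ} (hj : j < 3 ^ (r + 1)) : knat (r + 1) j = knat r j := by
  simp [knat, Nat.mod_eq_of_lt hj, show j < 2 * 3 ^ (r + 1) by omega]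

lemma knat_succ_add {r j : ℕ} (hj : j < 3 ^ (r + 1)) :
    knat (r + 1) (3 ^ (r + 1) + j) = knat r j := by
  simp [knat, Nat.add_mod_left, Nat.mod_eq_of_lt hj,
    show 3 ^ (r + 1) + j < 2 * 3 ^ (r + 1) by omega]

lemma knat_succ_add_add {r j : ℕ} (hj : j < 3 ^ (r + 1)) :
    knat (r + 1) (3 ^ (r + 1) + 3 ^ (r + 1) + j) = -knat r j := by
  have hmod : (3 ^ (r + 1) + 3 ^ (r + 1) + j) % 3 ^ (r + 1) = j := by
    rw [add_assoc, Nat.add_mod_left, Nat.add_mod_left, Nat.mod_eq_of_lt hj]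
  simp [knat, hmod, show ¬ 3 ^ (r + 1) + 3 ^ (r + 1) + j < 2 * 3 ^ (r + 1) by omega]

lemma sum_range_knat (r : ℕ) : ∑ j ∈ range (3 ^ (r + 1)), knat r j = 1 := by
  induction r with
  | zero => decide
  | succ r ih =>
    have hsplit : 3 ^ (r + 1 + 1) = 3 ^ (r + 1) + 3 ^ (r + 1) + 3 ^ (r + 1) := by ring
    rw [hsplit, sum_range_add, sum_range_add,
      sum_congr rfl fun j hj => knat_succ_of_lt (mem_range.1 hj),
      sum_congr rfl fun j hj => knat_succ_add (mem_range.1 hj),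
      sum_congr rfl fun j hj => knat_succ_add_add (mem_range.1 hj), sum_neg_distrib, ih]
    norm_num

/-- For every natural number `r`: (i) `∑ k_r = 1`; (ii) `min(∑⁺ k_r, ∑⁻ k_r) = ∑⁻ k_r`;
(iii) `∑⁻ k_r = (3^(r+1)+1)/2 - 1`. -/
theorem kvec_sums (r : ℕ) :
    (∑ j, kvec r j = 1) ∧
      min (sumPos (kvec r)) (sumNeg (kvec r)) = sumNeg (kvec r) ∧
      sumNeg (kvec r) = ((3 : ℤ) ^ (r + 1) + 1) / 2 - 1 := by
  have hsum : ∑ j, kvec r j = 1 := by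
    rw [← sum_range_knat r]
    exact Fin.sum_univ_eq_sum_range (knat r) _
  have hdiff : sumPos (kvec r) - sumNeg (kvec r) = 1 := by rw [sumPos_sub_sumNeg, hsum]
  have htotal : sumPos (kvec r) + sumNeg (kvec r) = 3 ^ (r + 1) := by
    simp [sumPos_add_sumNeg, kvec, abs_knat]
  refine ⟨hsum, min_eq_right (by omega), ?_⟩
  generalize (3 : ℤ) ^ (r + 1) = T at htotal
  omega
end

section
/- For every natural number r ≥ 1: (i) the rows of the matrix I_{3^r} ⊗ M_0 are linearly independent over ℚ, and (ii) the row space (over ℚ) of M_{r−1} ⊗ (1,1,1) and the row space of I_{3^r} ⊗ M_0 intersect only in the zero vector. -/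
/-- The first block of `M_r` (for `r ≥ 1`): the Kronecker product `M_{r-1} ⊗ (1,1,1)`,
viewed over ℚ. It has `3^r - 1` rows and `3^(r+1)` columns. -/
def block1 (r : ℕ) : Matrix (Fin (3 ^ r - 1)) (Fin (3 ^ (r + 1))) ℚ :=
  Matrix.of fun i j => ((Mnat (r - 1) i.val (j.val / 3) : ℤ) : ℚ)

/-- The second block of `M_r` (for `r ≥ 1`): the Kronecker product `I_{3^r} ⊗ M_0`,
viewed over ℚ. It has `2·3^r` rows and `3^(r+1)` columns; its row `2p + s` and column
`3q + t` entry is `δ_{p,q} · (M_0)_{s,t}`. -/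
def block2 (r : ℕ) : Matrix (Fin (2 * 3 ^ r)) (Fin (3 ^ (r + 1))) ℚ :=
  Matrix.of fun i j =>
    (((if i.val / 2 = j.val / 3 then M0nat (i.val % 2) (j.val % 3) else 0) : ℤ) : ℚ)

/-- Vectors constant on each block of 3 consecutive coordinates. -/
def constTriple (n : ℕ) : Submodule ℚ (Fin n → ℚ) where
  carrier := {v | ∀ j1 j2 : Fin n, j1.val / 3 = j2.val / 3 → v j1 = v j2}
  add_mem' := fun ha hb j1 j2 h => by simp [ha j1 j2 h, hb j1 j2 h]
  zero_mem' := fun j1 j2 _ => rfl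
  smul_mem' := fun c a ha j1 j2 h => by simp [ha j1 j2 h]

/-- Vectors satisfying v(3q+2) = v(3q) + v(3q+1) on each triple. -/
def sumTriple (n : ℕ) : Submodule ℚ (Fin n → ℚ) where
  carrier := {v | ∀ j1 j2 j3 : Fin n, j1.val / 3 = j2.val / 3 → j1.val / 3 = j3.val / 3 →
      j1.val % 3 = 0 → j2.val % 3 = 1 → j3.val % 3 = 2 → v j3 = v j1 + v j2}
  add_mem' := fun ha hb j1 j2 j3 h1 h2 h3 h4 h5 => by
    simp only [Pi.add_apply, ha j1 j2 j3 h1 h2 h3 h4 h5, hb j1 j2 j3 h1 h2 h3 h4 h5]; ring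
  zero_mem' := fun j1 j2 j3 _ _ _ _ _ => by simp
  smul_mem' := fun c a ha j1 j2 j3 h1 h2 h3 h4 h5 => by
    simp only [Pi.smul_apply, ha j1 j2 j3 h1 h2 h3 h4 h5, smul_add]

/-- For every `r ≥ 1`: (i) the rows of `I_{3^r} ⊗ M_0` are linearly independent over ℚ,
and (ii) the row space of `M_{r-1} ⊗ (1,1,1)` and the row space of `I_{3^r} ⊗ M_0`
intersect only in the zero vector. -/
theorem block2_rows_linearIndependent_and_rowSpaces_disjoint (r : ℕ) (hr : 1 ≤ r) :
    LinearIndependent ℚ (fun i => block2 r i) ∧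
      Submodule.span ℚ (Set.range fun i => block1 r i) ⊓
          Submodule.span ℚ (Set.range fun i => block2 r i) = ⊥ := by
  have h3 : 3 ^ (r + 1) = 3 * 3 ^ r := by ring
  constructor
  · rw [Fintype.linearIndependent_iff]
    intro g hg i
    have hN : 3 * (i.val / 2) + i.val % 2 < 3 ^ (r + 1) := by
      have hi := i.isLt; omega
    set c : Fin (3 ^ (r + 1)) := ⟨3 * (i.val / 2) + i.val % 2, hN⟩ with hc
    have hcd : c.val / 3 = i.val / 2 := by
      show (3 * (i.val / 2) + i.val % 2) / 3 = i.val / 2; omega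
    have hcm : c.val % 3 = i.val % 2 := by
      show (3 * (i.val / 2) + i.val % 2) % 3 = i.val % 2; omega
    have key := congrFun hg c
    simp only [Finset.sum_apply, Pi.smul_apply, Pi.zero_apply, smul_eq_mul] at key
    rw [Finset.sum_eq_single i] at key
    · rw [show block2 r i c = 1 from ?_, mul_one] at key
      · exact key
      · simp only [block2, Matrix.of_apply, hcd, hcm, if_pos rfl]
        have : i.val % 2 = 0 ∨ i.val % 2 = 1 := by omega
        rcases this with h | h <;> simp [h, M0nat]
    · intro i' _ hne
      rw [show block2 r i' c = 0 from ?_, mul_zero]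
      simp only [block2, Matrix.of_apply, hcd, hcm]
      by_cases hd : i'.val / 2 = i.val / 2
      · rw [if_pos hd]
        have hv : i'.val ≠ i.val := fun h => hne (Fin.ext h)
        have : (i'.val % 2 = 0 ∧ i.val % 2 = 1) ∨ (i'.val % 2 = 1 ∧ i.val % 2 = 0) := by omega
        rcases this with ⟨h1, h2⟩ | ⟨h1, h2⟩ <;> simp [h1, h2, M0nat]
      · rw [if_neg hd]; simp
    · intro h; exact absurd (Finset.mem_univ i) h
  · rw [eq_bot_iff]
    rintro v ⟨hv1, hv2⟩
    have h1 : v ∈ constTriple (3 ^ (r + 1)) := by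
      refine Submodule.span_le.mpr ?_ hv1
      rintro _ ⟨i, rfl⟩ j1 j2 h
      simp only [block1, Matrix.of_apply, h]
    have h2 : v ∈ sumTriple (3 ^ (r + 1)) := by
      refine Submodule.span_le.mpr ?_ hv2
      rintro _ ⟨i, rfl⟩ j1 j2 j3 hd1 hd2 hm1 hm2 hm3
      simp only [block2, Matrix.of_apply, hm1, hm2, hm3, ← hd1, ← hd2]
      by_cases hd : i.val / 2 = j1.val / 3
      · rw [if_pos hd, if_pos hd, if_pos hd]
        have : i.val % 2 = 0 ∨ i.val % 2 = 1 := by omega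
        rcases this with h | h <;> simp [h, M0nat]
      · rw [if_neg hd, if_neg hd, if_neg hd]; simp
    refine Submodule.mem_bot ℚ |>.mpr (funext fun j => ?_)
    have hb : 3 * (j.val / 3) + 2 < 3 ^ (r + 1) := by have hj := j.isLt; omega
    have e1 : v j = v ⟨3 * (j.val / 3), by omega⟩ :=
      h1 _ _ (by show j.val / 3 = 3 * (j.val / 3) / 3; omega)
    have e12 : v ⟨3 * (j.val / 3), by omega⟩ = v ⟨3 * (j.val / 3) + 1, by omega⟩ :=
      h1 _ _ (by show 3 * (j.val / 3) / 3 = (3 * (j.val / 3) + 1) / 3; omega)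
    have e13 : v ⟨3 * (j.val / 3), by omega⟩ = v ⟨3 * (j.val / 3) + 2, hb⟩ :=
      h1 _ _ (by show 3 * (j.val / 3) / 3 = (3 * (j.val / 3) + 2) / 3; omega)
    have es : v ⟨3 * (j.val / 3) + 2, hb⟩ =
        v ⟨3 * (j.val / 3), by omega⟩ + v ⟨3 * (j.val / 3) + 1, by omega⟩ :=
      h2 _ _ _ (by show 3 * (j.val / 3) / 3 = (3 * (j.val / 3) + 1) / 3; omega)
        (by show 3 * (j.val / 3) / 3 = (3 * (j.val / 3) + 2) / 3; omega)
        (by show 3 * (j.val / 3) % 3 = 0; omega)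
        (by show (3 * (j.val / 3) + 1) % 3 = 1; omega)
        (by show (3 * (j.val / 3) + 2) % 3 = 2; omega)
    have hz : v ⟨3 * (j.val / 3), by omega⟩ = 0 := by linarith [es, e12, e13]
    rw [e1, hz]; rfl
end
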